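/- Suppose u ∈ V satisfies a(u, v) = f(v) for all v ∈ V. Let V_n, V^D and V^R be finite-dimensional subspaces of V with V^R ⊆ V^D. Let u_n be a Galerkin solution on V_n with u_n ∈ V^D, let u^D be a Galerkin solution on V^D, and let u^R be a Galerkin solution on V^R. Then ‖u_n − u^R‖_V ≤ (γ/α)² ‖u − P_{V_n} u‖_V + (γ/α) ‖u^D − P_{V^R} u^D‖_V. -/

import Mathlib

/-!
Split `u_n - u^R = (u_n - u^D) + (u^D - u^R)`. Since `u^R` is the Galerkin solution of the problem
solved by `u^D`, on the subspace `V^R ⊆ V^D`, Céa's lemma bounds `‖u^D - u^R‖`. Since `u_n ∈ V^D` and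
`u - u^D` is `a`-orthogonal to `V^D`, coercivity gives `‖u_n - u^D‖ ≤ (γ/α) ‖u - u_n‖`, and Céa's lemma
on `V_n` bounds `‖u - u_n‖` in turn.
-/

open scoped RealInnerProductSpace

/-- Orthogonal projection onto a submodule, as a plain function; it equals the usual
orthogonal projection whenever the submodule is finite-dimensional. -/
noncomputable def orthProj {V : Type*} [NormedAddCommGroup V] [InnerProductSpace ℝ V]
    (K : Submodule ℝ V) (x : V) : V := by
  classical
  exact if h : FiniteDimensional ℝ K then
    haveI := h
    (K.orthogonalProjection x : V)
  else 0

lemma orthProj_mem {V : Type*} [NormedAddCommGroup V] [InnerProductSpace ℝ V]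
    (K : Submodule ℝ V) [FiniteDimensional ℝ K] (x : V) : orthProj K x ∈ K := by
  rw [orthProj, dif_pos ‹_›]
  exact SetLike.coe_mem _

namespace Galerkin

lemma le_of_coercive_of_bounded {V : Type*} [NormedAddCommGroup V] [Module ℝ V] [Nontrivial V]
    {a : V →ₗ[ℝ] V →ₗ[ℝ] ℝ} {α γ : ℝ} (hcoer : ∀ v : V, α * ‖v‖ ^ 2 ≤ a v v)
    (hcont : ∀ v w : V, |a v w| ≤ γ * ‖v‖ * ‖w‖) : α ≤ γ := by
  obtain ⟨v, hv⟩ := exists_ne (0 : V)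
  have hpos : 0 < ‖v‖ ^ 2 := by positivity
  refine le_of_mul_le_mul_right ?_ hpos
  calc α * ‖v‖ ^ 2 ≤ a v v := hcoer v
    _ ≤ γ * ‖v‖ * ‖v‖ := (le_abs_self _).trans (hcont v v)
    _ = γ * ‖v‖ ^ 2 := by ring

variable {V : Type*} [SeminormedAddCommGroup V] [Module ℝ V] {a : V →ₗ[ℝ] V →ₗ[ℝ] ℝ} {α γ : ℝ}

lemma orthogonality {f : V →ₗ[ℝ] ℝ} {W : Submodule ℝ V} {u₁ u₂ : V}
    (h₁ : ∀ w ∈ W, a u₁ w = f w) (h₂ : ∀ w ∈ W, a u₂ w = f w) :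
    ∀ z ∈ W, a (u₁ - u₂) z = 0 := fun z hz => by
  rw [map_sub, LinearMap.sub_apply, h₁ z hz, h₂ z hz, sub_self]

lemma norm_le_div_mul_of_apply_self_le (hα : 0 < α) (hγ : 0 ≤ γ)
    (hcoer : ∀ v : V, α * ‖v‖ ^ 2 ≤ a v v) {e d : V} (h : a e e ≤ γ * ‖e‖ * ‖d‖) :
    ‖e‖ ≤ γ / α * ‖d‖ := by
  rcases (norm_nonneg e).eq_or_lt with h0 | h0
  · rw [← h0]
    positivity
  · rw [div_mul_eq_mul_div, le_div_iff₀ hα]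
    nlinarith [hcoer e]

section Orthogonal

variable (hα : 0 < α) (hγ : 0 ≤ γ) (hcoer : ∀ v : V, α * ‖v‖ ^ 2 ≤ a v v)
  (hcont : ∀ v w : V, |a v w| ≤ γ * ‖v‖ * ‖w‖) {W : Submodule ℝ V} {u uW : V} (huW : uW ∈ W)
  (horth : ∀ z ∈ W, a (u - uW) z = 0)
include hα hγ hcoer hcont huW horth

/-- Céa's lemma. -/
lemma norm_sub_le_of_orthogonal {w : V} (hw : w ∈ W) : ‖u - uW‖ ≤ γ / α * ‖u - w‖ := by
  refine norm_le_div_mul_of_apply_self_le hα hγ hcoer ?_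
  calc a (u - uW) (u - uW) = a (u - uW) (u - w) + a (u - uW) (w - uW) := by
        rw [← map_add, sub_add_sub_cancel]
    _ = a (u - uW) (u - w) := by rw [horth _ (W.sub_mem hw huW), add_zero]
    _ ≤ γ * ‖u - uW‖ * ‖u - w‖ := (le_abs_self _).trans (hcont _ _)

lemma norm_mem_sub_le_of_orthogonal {x : V} (hx : x ∈ W) : ‖x - uW‖ ≤ γ / α * ‖u - x‖ := by
  refine norm_le_div_mul_of_apply_self_le hα hγ hcoer ?_
  calc a (x - uW) (x - uW) = a (x - u) (x - uW) + a (u - uW) (x - uW) := by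
        rw [← LinearMap.add_apply, ← map_add, sub_add_sub_cancel]
    _ = a (x - u) (x - uW) := by rw [horth _ (W.sub_mem hx huW), add_zero]
    _ ≤ γ * ‖u - x‖ * ‖x - uW‖ := by
        rw [← norm_sub_rev x u]
        exact (le_abs_self _).trans (hcont _ _)
    _ = γ * ‖x - uW‖ * ‖u - x‖ := by ring

end Orthogonal

end Galerkin

theorem rom_error_wrt_snapshot_via_full_pod_general
    {V : Type*} [NormedAddCommGroup V] [InnerProductSpace ℝ V]
    (a : V →ₗ[ℝ] V →ₗ[ℝ] ℝ) (f : V →ₗ[ℝ] ℝ)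
    (α γ : ℝ) (hα : 0 < α)
    (hcoer : ∀ v : V, α * ‖v‖ ^ 2 ≤ a v v)
    (hcont : ∀ v w : V, |a v w| ≤ γ * ‖v‖ * ‖w‖)
    (u : V) (hu : ∀ v : V, a u v = f v)
    (Vn VD VR : Submodule ℝ V)
    [FiniteDimensional ℝ ↥Vn] [FiniteDimensional ℝ ↥VR]
    (hRD : VR ≤ VD)
    (un : V) (hun : un ∈ Vn) (hunD : un ∈ VD) (hGaln : ∀ w ∈ Vn, a un w = f w)
    (uD : V) (huD : uD ∈ VD) (hGalD : ∀ w ∈ VD, a uD w = f w)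
    (uR : V) (huR : uR ∈ VR) (hGalR : ∀ w ∈ VR, a uR w = f w) :
    ‖un - uR‖ ≤ (γ / α) ^ 2 * ‖u - orthProj Vn u‖
      + (γ / α) * ‖uD - orthProj VR uD‖ := by
  rcases subsingleton_or_nontrivial V with hV | hV
  · simp only [Subsingleton.elim (_ - _ : V) 0, norm_zero, mul_zero, add_zero, le_refl]
  have hγ : 0 ≤ γ := hα.le.trans (Galerkin.le_of_coercive_of_bounded hcoer hcont)
  have hn : ‖u - un‖ ≤ γ / α * ‖u - orthProj Vn u‖ :=
    Galerkin.norm_sub_le_of_orthogonal hα hγ hcoer hcont hun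
      (Galerkin.orthogonality (fun w _ => hu w) hGaln) (orthProj_mem Vn u)
  have hnD : ‖un - uD‖ ≤ γ / α * ‖u - un‖ :=
    Galerkin.norm_mem_sub_le_of_orthogonal hα hγ hcoer hcont huD
      (Galerkin.orthogonality (fun w _ => hu w) hGalD) hunD
  have hDR : ‖uD - uR‖ ≤ γ / α * ‖uD - orthProj VR uD‖ :=
    Galerkin.norm_sub_le_of_orthogonal hα hγ hcoer hcont huR
      (Galerkin.orthogonality (fun w hw => hGalD w (hRD hw)) hGalR) (orthProj_mem VR uD)
  calc ‖un - uR‖ ≤ ‖un - uD‖ + ‖uD - uR‖ := norm_sub_le_norm_sub_add_norm_sub _ _ _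
    _ ≤ γ / α * (γ / α * ‖u - orthProj Vn u‖) + γ / α * ‖uD - orthProj VR uD‖ := by
        gcongr
        exact hnD.trans (by gcongr)
    _ = (γ / α) ^ 2 * ‖u - orthProj Vn u‖ + γ / α * ‖uD - orthProj VR uD‖ := by ring

/-- **Alternative error bound for the reduced-order solution with respect to the snapshot**, via the Galerkin solution `u^D` on the full POD space `V^D ⊇ V^R` containing the snapshot `u_n`. -/
theorem rom_error_wrt_snapshot_via_full_pod
    {V : Type*} [NormedAddCommGroup V] [InnerProductSpace ℝ V]
    (a : V →ₗ[ℝ] V →ₗ[ℝ] ℝ) (f : V →ₗ[ℝ] ℝ)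
    (α γ : ℝ) (hα : 0 < α)
    (hcoer : ∀ v : V, α * ‖v‖ ^ 2 ≤ a v v)
    (hcont : ∀ v w : V, |a v w| ≤ γ * ‖v‖ * ‖w‖)
    (u : V) (hu : ∀ v : V, a u v = f v)
    (Vn VD VR : Submodule ℝ V)
    [FiniteDimensional ℝ ↥Vn] [FiniteDimensional ℝ ↥VD] [FiniteDimensional ℝ ↥VR]
    (hRD : VR ≤ VD)
    (un : V) (hun : un ∈ Vn) (hunD : un ∈ VD) (hGaln : ∀ w ∈ Vn, a un w = f w)
    (uD : V) (huD : uD ∈ VD) (hGalD : ∀ w ∈ VD, a uD w = f w)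
    (uR : V) (huR : uR ∈ VR) (hGalR : ∀ w ∈ VR, a uR w = f w) :
    ‖un - uR‖ ≤ (γ / α) ^ 2 * ‖u - orthProj Vn u‖
      + (γ / α) * ‖uD - orthProj VR uD‖ :=
  rom_error_wrt_snapshot_via_full_pod_general a f α γ hα hcoer hcont u hu Vn VD VR hRD un hun hunD
    hGaln uD huD hGalD uR huR hGalR
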